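/- arXiv:2602.19057 — 3 statements merged into one kernel-verified Lean document; each statement's English description precedes it below -/
import Mathlib

section
/- Let W be a direction word of length w whose offsets Q_1,…,Q_w are pairwise distinct, and set P := P(W). For every labeling α : Λ_A → {X,Z} the following are equivalent: (i) for all a, b ∈ Λ_A with α(a) ≠ α(b), the cardinality of (a + P) ∩ (b + P) is even; (ii) for all a, b ∈ Λ_A with a − b ∈ L(P), one has α(a) = α(b). In words, a layout is commutation-compatible if and only if it is constant on cosets of the odd-multiplicity difference lattice L(P). -/
/-- The set of cardinal steps on the square lattice. -/
def Dir : Set (ℤ × ℤ) := {(0, 1), (1, 0), (0, -1), (-1, 0)}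

/-- Partial sums `S_j = d_1 + ⋯ + d_j` of a direction word (with `S_0 = 0`). -/
def partialSum (d : ℕ → ℤ × ℤ) (j : ℕ) : ℤ × ℤ := ∑ t ∈ Finset.Icc 1 j, d t

/-- Offsets `Q_j = S_{j-1} + S_j`. -/
def offset (d : ℕ → ℤ × ℤ) (j : ℕ) : ℤ × ℤ := partialSum d (j - 1) + partialSum d j

/-- `μ_P(v)`: the number of ordered pairs `(q, q') ∈ P × P` with `q' − q = v`. -/
def mu (P : Finset (ℤ × ℤ)) (v : ℤ × ℤ) : ℕ :=
  ((P ×ˢ P).filter (fun p => p.2 - p.1 = v)).card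

/-- The odd-multiplicity difference set `Δ_odd(P)`. -/
def deltaOdd (P : Finset (ℤ × ℤ)) : Set (ℤ × ℤ) := {v | v ≠ 0 ∧ Odd (mu P v)}

/-- The odd-multiplicity difference lattice `L(P)`: the additive subgroup of `ℤ²`
generated by `Δ_odd(P)`. -/
def oddLattice (P : Finset (ℤ × ℤ)) : AddSubgroup (ℤ × ℤ) :=
  AddSubgroup.closure (deltaOdd P)

/-- The ancilla sublattice `Λ_A = {(x,y) ∈ ℤ² : x + y odd}`. -/
def ancilla : Set (ℤ × ℤ) := {p | Odd (p.1 + p.2)}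

lemma mu_neg (P : Finset (ℤ × ℤ)) (v : ℤ × ℤ) : mu P (-v) = mu P v := by
  unfold mu
  apply Finset.card_bij (fun p _ => (p.2, p.1))
  · intro p hp
    simp only [Finset.mem_filter, Finset.mem_product] at hp ⊢
    refine ⟨⟨hp.1.2, hp.1.1⟩, ?_⟩
    have h := hp.2
    have := congrArg Neg.neg h
    simpa [neg_sub] using this
  · intro p hp q hq h
    exact Prod.ext (congrArg Prod.snd h) (congrArg Prod.fst h)
  · intro q hq
    simp only [Finset.mem_filter, Finset.mem_product] at hq
    refine ⟨(q.2, q.1), ?_, rfl⟩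
    simp only [Finset.mem_filter, Finset.mem_product]
    refine ⟨⟨hq.1.2, hq.1.1⟩, ?_⟩
    have := congrArg Neg.neg hq.2
    simpa [neg_sub] using this

lemma card_inter_eq_mu (P : Finset (ℤ × ℤ)) (a b : ℤ × ℤ) :
    ((P.image (a + ·)) ∩ (P.image (b + ·))).card = mu P (a - b) := by
  unfold mu
  symm
  apply Finset.card_bij (fun p _ => a + p.1)
  · intro p hp
    simp only [Finset.mem_filter, Finset.mem_product] at hp
    simp only [Finset.mem_inter, Finset.mem_image]
    refine ⟨⟨p.1, hp.1.1, rfl⟩, ⟨p.2, hp.1.2, ?_⟩⟩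
    have h := hp.2
    rw [sub_eq_sub_iff_add_eq_add] at h
    rw [add_comm b p.2, h, add_comm]
  · intro p hp q hq h
    simp only [Finset.mem_filter, Finset.mem_product] at hp hq
    have h1 : p.1 = q.1 := add_left_cancel h
    have h2 : p.2 = q.2 := by
      have hp2 : p.2 = p.1 + (a - b) := by
        have := hp.2; rw [sub_eq_iff_eq_add] at this; rw [this, add_comm]
      have hq2 : q.2 = q.1 + (a - b) := by
        have := hq.2; rw [sub_eq_iff_eq_add] at this; rw [this, add_comm]
      rw [hp2, hq2, h1]
    exact Prod.ext h1 h2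
  · intro x hx
    simp only [Finset.mem_inter, Finset.mem_image] at hx
    obtain ⟨⟨q, hq, hqx⟩, ⟨q', hq', hq'x⟩⟩ := hx
    refine ⟨(q, q'), ?_, hqx⟩
    simp only [Finset.mem_filter, Finset.mem_product]
    refine ⟨⟨hq, hq'⟩, ?_⟩
    rw [sub_eq_sub_iff_add_eq_add]
    have : b + q' = a + q := by rw [hqx, hq'x]
    rw [add_comm q' b, this, add_comm]

lemma psum_parity (w : ℕ) (d : ℕ → ℤ × ℤ) (hW : ∀ t, 1 ≤ t → t ≤ w → d t ∈ Dir)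
    (j : ℕ) (hj : j ≤ w) :
    ((partialSum d j).1 + (partialSum d j).2) % 2 = (j : ℤ) % 2 := by
  unfold partialSum
  rw [Prod.fst_sum, Prod.snd_sum, ← Finset.sum_add_distrib, Finset.sum_int_mod]
  have : ∀ t ∈ Finset.Icc 1 j, ((d t).1 + (d t).2) % 2 = 1 := by
    intro t ht
    simp only [Finset.mem_Icc] at ht
    have hd := hW t ht.1 (le_trans ht.2 hj)
    simp only [Dir, Set.mem_insert_iff, Set.mem_singleton_iff] at hd
    rcases hd with h | h | h | h <;> rw [h] <;> decide
  rw [Finset.sum_congr rfl this]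
  simp [Nat.card_Icc]

lemma offset_parity (w : ℕ) (d : ℕ → ℤ × ℤ) (hW : ∀ t, 1 ≤ t → t ≤ w → d t ∈ Dir)
    (j : ℕ) (hj1 : 1 ≤ j) (hjw : j ≤ w) :
    ((offset d j).1 + (offset d j).2) % 2 = 1 := by
  unfold offset
  have h1 := psum_parity w d hW (j - 1) (by omega)
  have h2 := psum_parity w d hW j hjw
  have hc : ((j - 1 : ℕ) : ℤ) = (j : ℤ) - 1 := by omega
  simp only [Prod.fst_add, Prod.snd_add]
  omega

lemma mem_P_parity (w : ℕ) (d : ℕ → ℤ × ℤ) (hW : ∀ t, 1 ≤ t → t ≤ w → d t ∈ Dir)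
    (q : ℤ × ℤ) (hq : q ∈ (Finset.Icc 1 w).image (offset d)) :
    (q.1 + q.2) % 2 = 1 := by
  simp only [Finset.mem_image, Finset.mem_Icc] at hq
  obtain ⟨j, ⟨hj1, hjw⟩, rfl⟩ := hq
  exact offset_parity w d hW j hj1 hjw

lemma mu_odd_even_sum (w : ℕ) (d : ℕ → ℤ × ℤ) (hW : ∀ t, 1 ≤ t → t ≤ w → d t ∈ Dir)
    (v : ℤ × ℤ) (hodd : Odd (mu ((Finset.Icc 1 w).image (offset d)) v)) :
    (v.1 + v.2) % 2 = 0 := by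
  have hne : mu ((Finset.Icc 1 w).image (offset d)) v ≠ 0 := by
    rcases hodd with ⟨k, hk⟩; omega
  unfold mu at hne
  obtain ⟨p, hp⟩ := Finset.card_ne_zero.mp hne
  simp only [Finset.mem_filter, Finset.mem_product] at hp
  have h1 := mem_P_parity w d hW p.1 hp.1.1
  have h2 := mem_P_parity w d hW p.2 hp.1.2
  have hv1 : v.1 = p.2.1 - p.1.1 := by rw [← hp.2]; rfl
  have hv2 : v.2 = p.2.2 - p.1.2 := by rw [← hp.2]; rfl
  omega

theorem test : True := trivial

lemma mem_ancilla_add (c v : ℤ × ℤ) (hc : c ∈ ancilla) (hv : (v.1 + v.2) % 2 = 0) :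
    c + v ∈ ancilla := by
  simp only [ancilla, Set.mem_setOf_eq, Prod.fst_add, Prod.snd_add, Int.odd_iff] at *
  omega

/-- layout coset theorem: for a direction word `W` with pairwise
distinct offsets and support pattern `P = P(W)`, a labeling `α : Λ_A → {X, Z}` has
even overlap `|(a+P) ∩ (b+P)|` for all opposite-type ancilla pairs `a, b` (i.e. is
commutation-compatible) if and only if it is constant on cosets of `L(P)`. -/
theorem layout_coset_theorem (w : ℕ) (d : ℕ → ℤ × ℤ)
    (hW : ∀ t, 1 ≤ t → t ≤ w → d t ∈ Dir)
    (hinj : Set.InjOn (offset d) (Finset.Icc 1 w))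
    (P : Finset (ℤ × ℤ)) (hP : P = (Finset.Icc 1 w).image (offset d))
    (α : ℤ × ℤ → Bool) :
    (∀ a ∈ ancilla, ∀ b ∈ ancilla, α a ≠ α b →
        Even (((P.image (a + ·)) ∩ (P.image (b + ·))).card)) ↔
      (∀ a ∈ ancilla, ∀ b ∈ ancilla, a - b ∈ oddLattice P → α a = α b) := by
  subst hP
  set P := (Finset.Icc 1 w).image (offset d) with hP
  constructor
  · intro h a ha b hb hab
    -- the subgroup of "good" vectors
    let H : AddSubgroup (ℤ × ℤ) :=
      { carrier := {v | (v.1 + v.2) % 2 = 0 ∧ ∀ c ∈ ancilla, α (c + v) = α c}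
        zero_mem' := by
          constructor
          · rfl
          · intro c hc; rw [add_zero]
        add_mem' := by
          rintro v u ⟨hv1, hv2⟩ ⟨hu1, hu2⟩
          constructor
          · simp only [Prod.fst_add, Prod.snd_add]; omega
          · intro c hc
            rw [← add_assoc, hu2 (c + v) (mem_ancilla_add c v hc hv1), hv2 c hc]
        neg_mem' := by
          rintro v ⟨hv1, hv2⟩
          constructor
          · simp only [Prod.fst_neg, Prod.snd_neg]; omega
          · intro c hc
            have hc' : c + -v ∈ ancilla := by
              apply mem_ancilla_add c (-v) hc
              simp only [Prod.fst_neg, Prod.snd_neg]; omega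
            have := hv2 (c + -v) hc'
            rw [add_assoc, neg_add_cancel, add_zero] at this
            exact this.symm }
    have hsub : oddLattice P ≤ H := by
      rw [oddLattice, AddSubgroup.closure_le]
      rintro v ⟨hv0, hvodd⟩
      have hveven : (v.1 + v.2) % 2 = 0 := mu_odd_even_sum w d hW v hvodd
      refine ⟨hveven, ?_⟩
      intro c hc
      by_contra hne
      have hcv : c + v ∈ ancilla := mem_ancilla_add c v hc hveven
      have heven := h c hc (c + v) hcv (fun hh => hne hh.symm)
      rw [card_inter_eq_mu] at heven
      have : c - (c + v) = -v := by ring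
      rw [this, mu_neg] at heven
      exact (Nat.not_even_iff_odd.mpr hvodd) heven
    have hmem := hsub hab
    have := hmem.2 b hb
    rwa [show b + (a - b) = a by ring] at this
  · intro h a ha b hb hab
    rw [card_inter_eq_mu]
    by_contra hodd
    rw [Nat.not_even_iff_odd] at hodd
    by_cases h0 : a - b = 0
    · exact hab (congrArg α (sub_eq_zero.mp h0))
    · have hmem : a - b ∈ oddLattice P := AddSubgroup.subset_closure ⟨h0, hodd⟩
      exact hab (h a ha b hb hmem)
end

section
/- Let G₀ be a finite abelian group, R := F₂[G₀], and let (h_{X,0}, h_{X,1}) and (h_{Z,0}, h_{Z,1}) be two pairs of elements of R with associated block-circulant matrices H_X and H_Z. Set n := 2·|G₀|, the common number of columns. Then n − rank_{F₂}(H_X) − rank_{F₂}(H_Z) = dim_{F₂} Ann_R(h_{X,0},h_{X,1}) + dim_{F₂} Ann_R(h_{Z,0},h_{Z,1}). -/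
/-- The block-circulant matrix `H ∈ F₂^{G₀ × ({0,1} × G₀)}` associated with a pair
`h₀, h₁` of elements of the group algebra `R = F₂[G₀]`:
`H(g, (σ, g')) = (coefficient of g' − g in h_σ)`. -/
def blockMat {G : Type*} [AddCommGroup G] (h0 h1 : AddMonoidAlgebra (ZMod 2) G) :
    Matrix G (Bool × G) (ZMod 2) :=
  fun g p => (if p.1 then h1 else h0).coeff (p.2 - g)

/-- The annihilator `Ann_R(h₀, h₁) = {f ∈ R : f·h₀ = 0 ∧ f·h₁ = 0}` as an
`F₂`-subspace of `R = F₂[G₀]`. -/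
noncomputable def annih {G : Type*} [AddCommGroup G]
    (h0 h1 : AddMonoidAlgebra (ZMod 2) G) :
    Submodule (ZMod 2) (AddMonoidAlgebra (ZMod 2) G) :=
  LinearMap.ker (LinearMap.mulRight (ZMod 2) h0) ⊓
    LinearMap.ker (LinearMap.mulRight (ZMod 2) h1)


open Finset in
private lemma mul_apply_full {G : Type*} [AddCommGroup G] [Fintype G] [DecidableEq G]
    (f h : AddMonoidAlgebra (ZMod 2) G) (x : G) :
    (f * h).coeff x = ∑ g : G, f.coeff g * h.coeff (x - g) := by
  classical
  rw [AddMonoidAlgebra.coeff_mul]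
  rw [Finsupp.sum_fintype _ _ (by intro a; simp)]
  refine Finset.sum_congr rfl fun a _ => ?_
  rw [Finsupp.sum_fintype _ _ (by intro b; simp)]
  rw [Finset.sum_eq_single (x - a)]
  · simp
  · intro b _ hb
    rw [if_neg]
    intro hc
    exact hb (eq_sub_of_add_eq' hc)
  · intro hx
    exact absurd (Finset.mem_univ _) hx

open Matrix in
private lemma rank_add_annih {G : Type*} [AddCommGroup G] [Fintype G] [DecidableEq G]
    (h0 h1 : AddMonoidAlgebra (ZMod 2) G) :
    (blockMat h0 h1).rank + Module.finrank (ZMod 2) (annih h0 h1) = Fintype.card G := by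
  classical
  set e : AddMonoidAlgebra (ZMod 2) G ≃ₗ[ZMod 2] (G → ZMod 2) :=
    (AddMonoidAlgebra.coeffLinearEquiv (ZMod 2)).trans
      (Finsupp.linearEquivFunOnFinite (ZMod 2) (ZMod 2) G) with he
  set A := (blockMat h0 h1)ᵀ with hA
  have key : ∀ (v : G → ZMod 2) (σ : Bool) (x : G),
      A.mulVec v (σ, x) = ((e.symm v) * (if σ then h1 else h0)).coeff x := by
    intro v σ x
    rw [mul_apply_full]
    simp only [hA, Matrix.mulVec, Matrix.transpose_apply, dotProduct, blockMat]
    refine Finset.sum_congr rfl fun g _ => ?_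
    rw [mul_comm]
    rfl
  have hker : LinearMap.ker A.mulVecLin = (annih h0 h1).map e.toLinearMap := by
    rw [Submodule.map_equiv_eq_comap_symm]
    ext v
    simp only [LinearMap.mem_ker, Submodule.mem_comap, annih, Submodule.mem_inf,
      LinearEquiv.coe_coe, LinearMap.mem_ker, LinearMap.mulRight_apply]
    constructor
    · intro h
      have h' : ∀ p, A.mulVec v p = 0 := fun p => congrFun h p
      refine ⟨AddMonoidAlgebra.ext (Finsupp.ext fun x => ?_),
          AddMonoidAlgebra.ext (Finsupp.ext fun x => ?_)⟩
      · have := (key v false x).symm.trans (h' (false, x))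
        simpa using this
      · have := (key v true x).symm.trans (h' (true, x))
        simpa using this
    · rintro ⟨hh0, hh1⟩
      funext p
      obtain ⟨σ, x⟩ := p
      have := key v σ x
      cases σ <;> simp only [Matrix.mulVecLin_apply, Pi.zero_apply] <;> rw [this] <;>
        simp only [Bool.false_eq_true, ↓reduceIte, hh0, hh1, AddMonoidAlgebra.coeff_zero,
          Finsupp.coe_zero, Pi.zero_apply]
  have hrn := LinearMap.finrank_range_add_finrank_ker A.mulVecLin
  rw [hker, LinearEquiv.finrank_map_eq, Module.finrank_fintype_fun_eq_card] at hrn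
  have hr : (blockMat h0 h1).rank = Module.finrank (ZMod 2) (LinearMap.range A.mulVecLin) := by
    rw [← Matrix.rank_transpose (blockMat h0 h1)]
    rfl
  rw [hr]
  exact hrn

/-- for a finite abelian group `G₀`, `R = F₂[G₀]`, two pairs
`(h_{X,0}, h_{X,1})`, `(h_{Z,0}, h_{Z,1})` of elements of `R` with associated
block-circulant matrices `H_X`, `H_Z`, and `n = 2·|G₀|`:
`n − rank(H_X) − rank(H_Z) = dim Ann_R(h_{X,0},h_{X,1}) + dim Ann_R(h_{Z,0},h_{Z,1})`. -/
theorem k_eq_sum_annihilator_dims (G : Type*) [AddCommGroup G] [Fintype G]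
    [DecidableEq G] (hX0 hX1 hZ0 hZ1 : AddMonoidAlgebra (ZMod 2) G) :
    2 * Fintype.card G - (blockMat hX0 hX1).rank - (blockMat hZ0 hZ1).rank =
      Module.finrank (ZMod 2) (annih hX0 hX1) +
        Module.finrank (ZMod 2) (annih hZ0 hZ1) := by
  have hX := rank_add_annih hX0 hX1
  have hZ := rank_add_annih hZ0 hZ1
  omega
end

section
/- For the directional CSS construction of the word W = NE²NE²N with the row-alternating layout on the torus (ℤ/L_x) × (ℤ/L_y) with L_x, L_y even positive integers: dim_{F₂} ker(H_Xᵀ) = dim_{F₂} ker(H_Zᵀ) = deg gcd_{F₂[Y]}(1 + Y + Y², Y^{L_y/2} − 1), and hence k = 2·deg gcd_{F₂[Y]}(1 + Y + Y², Y^{L_y/2} − 1). In particular, k = 4 if 6 divides L_y, and k = 0 otherwise. -/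
/-- The torus `G = (ℤ/L_x) × (ℤ/L_y)`. -/
abbrev Torus (Lx Ly : ℕ) := ZMod Lx × ZMod Ly

/-- The parity map `π : G → ℤ/2`, `π(x, y) = x + y mod 2` (well defined since
`2 ∣ L_x` and `2 ∣ L_y`). -/
def torusParity {Lx Ly : ℕ} (hx : 2 ∣ Lx) (hy : 2 ∣ Ly) (p : Torus Lx Ly) : ZMod 2 :=
  ZMod.castHom hx (ZMod 2) p.1 + ZMod.castHom hy (ZMod 2) p.2

/-- Data sites `Λ_Q = π⁻¹(0)`. -/
abbrev DataSite (Lx Ly : ℕ) (hx : 2 ∣ Lx) (hy : 2 ∣ Ly) :=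
  {p : Torus Lx Ly // torusParity hx hy p = 0}

/-- X-ancillas under row alternation: `π(p) = 1` and `y ≡ 0 (mod 2)`. -/
abbrev XAncilla (Lx Ly : ℕ) (hx : 2 ∣ Lx) (hy : 2 ∣ Ly) :=
  {p : Torus Lx Ly // torusParity hx hy p = 1 ∧ ZMod.castHom hy (ZMod 2) p.2 = 0}

/-- Z-ancillas under row alternation: `π(p) = 1` and `y ≡ 1 (mod 2)`. -/
abbrev ZAncilla (Lx Ly : ℕ) (hx : 2 ∣ Lx) (hy : 2 ∣ Ly) :=
  {p : Torus Lx Ly // torusParity hx hy p = 1 ∧ ZMod.castHom hy (ZMod 2) p.2 = 1}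

/-- The offset list of the word `W = NE²NE²N`. -/
def offsets : List (ℤ × ℤ) := [(0, 1), (1, 2), (3, 2), (4, 3), (5, 4), (7, 4), (8, 5)]

/-- Reduction of an integer offset into the torus. -/
def toTorus (Lx Ly : ℕ) (q : ℤ × ℤ) : Torus Lx Ly := ((q.1 : ZMod Lx), (q.2 : ZMod Ly))

/-- The X-check matrix `H_X ∈ F₂^{Λ_X × Λ_Q}`:
`H_X(a, q) = #{j : q = a + Q_j} mod 2`. -/
def HX (Lx Ly : ℕ) (hx : 2 ∣ Lx) (hy : 2 ∣ Ly) :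
    Matrix (XAncilla Lx Ly hx hy) (DataSite Lx Ly hx hy) (ZMod 2) :=
  fun a q =>
    ((offsets.countP fun Qj => decide ((q : Torus Lx Ly) = a + toTorus Lx Ly Qj)) : ℕ)

/-- The Z-check matrix `H_Z ∈ F₂^{Λ_Z × Λ_Q}`:
`H_Z(a, q) = #{j : q = a + Q_j} mod 2`. -/
def HZ (Lx Ly : ℕ) (hx : 2 ∣ Lx) (hy : 2 ∣ Ly) :
    Matrix (ZAncilla Lx Ly hx hy) (DataSite Lx Ly hx hy) (ZMod 2) :=
  fun a q =>
    ((offsets.countP fun Qj => decide ((q : Torus Lx Ly) = a + toTorus Lx Ly Qj)) : ℕ)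

/-- The logical dimension `k = n − rank(H_X) − rank(H_Z)` with `n = |Λ_Q|`. -/
noncomputable def kDim (Lx Ly : ℕ) [NeZero Lx] [NeZero Ly]
    (hx : 2 ∣ Lx) (hy : 2 ∣ Ly) : ℕ :=
  Fintype.card (DataSite Lx Ly hx hy) - (HX Lx Ly hx hy).rank - (HZ Lx Ly hx hy).rank

set_option linter.unusedSectionVars false

namespace KC

variable {Lx Ly : ℕ}

/-- shift by a natural-number vector -/
def sh (a b : ℕ) (p : Torus Lx Ly) : Torus Lx Ly := (p.1 + (a : ZMod Lx), p.2 + (b : ZMod Ly))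

lemma sh_sh (a b c d : ℕ) (p : Torus Lx Ly) : sh a b (sh c d p) = sh (a+c) (b+d) p := by
  unfold sh; ext <;> push_cast <;> ring

lemma sh_zero (p : Torus Lx Ly) : sh 0 0 p = p := by
  unfold sh; ext <;> push_cast <;> ring

section Core
variable {g : Torus Lx Ly → ZMod 2}
  (hA : ∀ p, g p + g (sh 2 0 p) + g (sh 4 2 p) + g (sh 6 2 p) = 0)
  (hB : ∀ p, g p + g (sh 4 2 p) + g (sh 8 4 p) = 0)

include hA hB in
lemma core_xstep : ∀ p, g (sh 2 0 p) = g p := by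
  intro p
  have e1 := hB p
  have e2 := hB (sh 2 0 p)
  have e3 := hA (sh 4 2 p)
  simp only [sh_sh] at e2 e3
  norm_num at e2 e3
  have h2 : (2 : ZMod 2) = 0 := rfl
  linear_combination e1 + e2 + e3 - (g p + g (sh 4 2 p) + g (sh 8 4 p) + g (sh 6 2 p) + g (sh 10 4 p)) * h2

include hA hB in
lemma core_xmul : ∀ (k : ℕ) p, g (sh (2*k) 0 p) = g p := by
  intro k
  induction k with
  | zero => simpa using fun p => congrArg g (sh_zero p)
  | succ n ih =>
    intro p
    have : sh (2*(n+1)) 0 p = sh 2 0 (sh (2*n) 0 p) := by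
      rw [sh_sh]; congr 1; ring
    rw [this, core_xstep hA hB, ih]

include hA hB in
lemma core_ystep : ∀ p, g p + g (sh 0 2 p) + g (sh 0 4 p) = 0 := by
  intro p
  have e1 := hB p
  have h1 : g (sh 4 2 p) = g (sh 0 2 p) := by
    have := core_xmul hA hB 2 (sh 0 2 p)
    simp only [sh_sh] at this
    norm_num at this
    exact this
  have h2 : g (sh 8 4 p) = g (sh 0 4 p) := by
    have := core_xmul hA hB 4 (sh 0 4 p)
    simp only [sh_sh] at this
    norm_num at this
    exact this
  rw [h1, h2] at e1
  exact e1

include hA hB in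
lemma core_y6 : ∀ p, g (sh 0 6 p) = g p := by
  intro p
  have e1 := core_ystep hA hB p
  have e2 := core_ystep hA hB (sh 0 2 p)
  simp only [sh_sh] at e2
  norm_num at e2
  have h2 : (2 : ZMod 2) = 0 := rfl
  linear_combination e1 + e2 - (g p + g (sh 0 2 p) + g (sh 0 4 p)) * h2

include hA hB in
lemma core_y6mul : ∀ (k : ℕ) p, g (sh 0 (6*k) p) = g p := by
  intro k
  induction k with
  | zero => simpa using fun p => congrArg g (sh_zero p)
  | succ n ih =>
    intro p
    have : sh 0 (6*(n+1)) p = sh 0 6 (sh 0 (6*n) p) := by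
      rw [sh_sh]; congr 1; ring
    rw [this, core_y6 hA hB, ih]

end Core

section Orbit
variable [NeZero Lx] [NeZero Ly]

lemma exists_nat_mul {L d : ℕ} [NeZero L] [NeZero d] (hd : d ∣ L) (z : ZMod L)
    (h : ZMod.castHom hd (ZMod d) z = 0) : ∃ k : ℕ, z = ((d * k : ℕ) : ZMod L) := by
  have hz : ((z.val : ℕ) : ZMod L) = z := ZMod.natCast_rightInverse z
  have h2 : ((z.val : ℕ) : ZMod d) = 0 := by
    calc ((z.val : ℕ) : ZMod d)
        = ZMod.castHom hd (ZMod d) ((z.val : ℕ) : ZMod L) := (map_natCast _ _).symm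
      _ = ZMod.castHom hd (ZMod d) z := by rw [hz]
      _ = 0 := h
  have hdvd : d ∣ z.val := by
    rwa [ZMod.natCast_eq_zero_iff] at h2
  obtain ⟨k, hk⟩ := hdvd
  exact ⟨k, by rw [← hz, hk]⟩

variable (hx : 2 ∣ Lx) (hy : 2 ∣ Ly)
variable {g : Torus Lx Ly → ZMod 2}
  (hA : ∀ p, g p + g (sh 2 0 p) + g (sh 4 2 p) + g (sh 6 2 p) = 0)
  (hB : ∀ p, g p + g (sh 4 2 p) + g (sh 8 4 p) = 0)

include hA hB in
/-- g is constant along rows with the same x-parity. -/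
lemma g_const_x (p q : Torus Lx Ly)
    (h1 : ZMod.castHom hx (ZMod 2) p.1 = ZMod.castHom hx (ZMod 2) q.1)
    (h2 : p.2 = q.2) : g p = g q := by
  obtain ⟨k, hk⟩ := exists_nat_mul hx (q.1 - p.1) (by rw [map_sub, h1, sub_self])
  have hq : q = sh (2*k) 0 p := by
    unfold sh
    ext
    · push_cast
      push_cast at hk
      linear_combination hk
    · simpa using h2.symm
  rw [hq, core_xmul hA hB]

include hA hB in
/-- if `6 ∣ Ly`, g only depends on x-parity and y mod 6. -/
lemma g_const_6 (h6 : 6 ∣ Ly) (p q : Torus Lx Ly)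
    (h1 : ZMod.castHom hx (ZMod 2) p.1 = ZMod.castHom hx (ZMod 2) q.1)
    (h2 : ZMod.castHom h6 (ZMod 6) p.2 = ZMod.castHom h6 (ZMod 6) q.2) : g p = g q := by
  have step1 : g p = g (q.1, p.2) := g_const_x hx hA hB _ _ h1 rfl
  obtain ⟨k, hk⟩ := exists_nat_mul h6 (q.2 - p.2) (by rw [map_sub, h2, sub_self])
  have hq : q = sh 0 (6*k) (q.1, p.2) := by
    unfold sh
    ext
    · simp
    · push_cast
      push_cast at hk
      linear_combination hk
  rw [step1]
  conv_rhs => rw [hq]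
  exact (core_y6mul hA hB k _).symm

include hA hB hy in
lemma g_zero_of_not_dvd (h3 : ¬ 3 ∣ (Ly / 2)) : ∀ p, g p = 0 := by
  set N := Ly / 2 with hN
  have hLy : Ly = 2 * N := by
    have h2 := hy
    omega
  have hN0 : N ≠ 0 := by
    have := Nat.pos_of_ne_zero (NeZero.ne Ly); omega
  haveI : NeZero N := ⟨hN0⟩
  have hcop : Nat.Coprime 3 N := (Nat.prime_three.coprime_iff_not_dvd).2 h3
  have hinv : ((3 : ℕ) : ZMod N) * ((3 : ℕ) : ZMod N)⁻¹ = 1 := ZMod.coe_mul_inv_eq_one 3 hcop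
  set k : ℕ := (((3 : ℕ) : ZMod N)⁻¹).val with hk
  have h1 : ((3 * k : ℕ) : ZMod N) = ((1 : ℕ) : ZMod N) := by
    push_cast
    rw [hk, ZMod.natCast_val, ZMod.cast_id]
    simpa using hinv
  have hmod : 3 * k ≡ 1 [MOD N] := (ZMod.natCast_eq_natCast_iff _ _ _).1 h1
  have hmod2 : 6 * k ≡ 2 [MOD Ly] := by
    have h' := hmod.mul_left' (c := 2)
    rw [← hLy] at h'
    have e1 : 2*(3*k) = 6*k := by ring
    have e2 : 2*1 = 2 := by norm_num
    rwa [e1, e2] at h'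
  have hZ : ((6 * k : ℕ) : ZMod Ly) = ((2 : ℕ) : ZMod Ly) :=
    (ZMod.natCast_eq_natCast_iff _ _ _).2 hmod2
  have hper : ∀ p : Torus Lx Ly, g (sh 0 2 p) = g p := by
    intro p
    have hgen := core_y6mul hA hB k p
    have hsame : sh 0 (6*k) p = sh 0 2 p := by
      unfold sh
      rw [hZ]
    rwa [hsame] at hgen
  intro p
  have e := core_ystep hA hB p
  have e2 : g (sh 0 4 p) = g p := by
    have h4 : sh 0 4 p = sh 0 2 (sh 0 2 p) := by rw [sh_sh]
    rw [h4, hper, hper]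
  rw [hper p, e2] at e
  have htwo : (2 : ZMod 2) = 0 := rfl
  linear_combination e - (g p) * htwo

end Orbit

section Matrixpart

variable [NeZero Lx] [NeZero Ly] (hx : 2 ∣ Lx) (hy : 2 ∣ Ly)

/-- extension by zero of a function on a subtype -/
def extF (P : Torus Lx Ly → Prop) [DecidablePred P]
    (f : {p : Torus Lx Ly // P p} → ZMod 2) (p : Torus Lx Ly) : ZMod 2 :=
  if h : P p then f ⟨p, h⟩ else 0

lemma extF_eq_zero {P : Torus Lx Ly → Prop} [DecidablePred P]
    (f : {p : Torus Lx Ly // P p} → ZMod 2) {p : Torus Lx Ly} (h : ¬ P p) :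
    extF P f p = 0 := dif_neg h

lemma extF_pos {P : Torus Lx Ly → Prop} [DecidablePred P]
    (f : {p : Torus Lx Ly // P p} → ZMod 2) {p : Torus Lx Ly} (h : P p) :
    extF P f p = f ⟨p, h⟩ := dif_pos h

lemma sum_ite_subtype (P : Torus Lx Ly → Prop) [DecidablePred P]
    (f : {p : Torus Lx Ly // P p} → ZMod 2) (v : Torus Lx Ly) :
    (∑ a : {p : Torus Lx Ly // P p}, if (a : Torus Lx Ly) = v then f a else 0)
      = extF P f v := by
  by_cases h : P v
  · rw [extF_pos f h]
    rw [Finset.sum_eq_single_of_mem (⟨v, h⟩ : {p : Torus Lx Ly // P p}) (Finset.mem_univ _)]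
    · rw [if_pos rfl]
    · intro b _ hb
      rw [if_neg]
      intro hc
      exact hb (Subtype.ext hc)
  · rw [extF_eq_zero f h]
    apply Finset.sum_eq_zero
    intro a _
    rw [if_neg]
    intro hc
    exact h (hc ▸ a.2)

/-- the generic check matrix on an ancilla subtype -/
def HM (P : Torus Lx Ly → Prop) :
    Matrix {p : Torus Lx Ly // P p} (DataSite Lx Ly hx hy) (ZMod 2) :=
  fun a q =>
    ((offsets.countP fun Qj => decide ((q : Torus Lx Ly) = a + toTorus Lx Ly Qj)) : ℕ)

lemma HM_apply (P : Torus Lx Ly → Prop) (a : {p : Torus Lx Ly // P p})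
    (q : DataSite Lx Ly hx hy) :
    HM hx hy P a q
    = (if (q : Torus Lx Ly) = ↑a + toTorus Lx Ly (0,1) then 1 else 0)
    + (if (q : Torus Lx Ly) = ↑a + toTorus Lx Ly (1,2) then 1 else 0)
    + (if (q : Torus Lx Ly) = ↑a + toTorus Lx Ly (3,2) then 1 else 0)
    + (if (q : Torus Lx Ly) = ↑a + toTorus Lx Ly (4,3) then 1 else 0)
    + (if (q : Torus Lx Ly) = ↑a + toTorus Lx Ly (5,4) then 1 else 0)
    + (if (q : Torus Lx Ly) = ↑a + toTorus Lx Ly (7,4) then 1 else 0)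
    + (if (q : Torus Lx Ly) = ↑a + toTorus Lx Ly (8,5) then 1 else 0) := by
  unfold HM
  simp only [offsets, List.countP_cons, List.countP_nil, decide_eq_true_eq]
  push_cast
  ring

/-- the 7-term expansion of the left multiplication -/
lemma vecMul_HM (P : Torus Lx Ly → Prop) [DecidablePred P]
    (f : {p : Torus Lx Ly // P p} → ZMod 2) (q : DataSite Lx Ly hx hy) :
    (HM hx hy P).vecMul f q
    = extF P f ((q : Torus Lx Ly) - toTorus Lx Ly (0,1))
    + extF P f ((q : Torus Lx Ly) - toTorus Lx Ly (1,2))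
    + extF P f ((q : Torus Lx Ly) - toTorus Lx Ly (3,2))
    + extF P f ((q : Torus Lx Ly) - toTorus Lx Ly (4,3))
    + extF P f ((q : Torus Lx Ly) - toTorus Lx Ly (5,4))
    + extF P f ((q : Torus Lx Ly) - toTorus Lx Ly (7,4))
    + extF P f ((q : Torus Lx Ly) - toTorus Lx Ly (8,5)) := by
  have key : ∀ t : Torus Lx Ly,
      (∑ a : {p : Torus Lx Ly // P p}, if (q : Torus Lx Ly) = ↑a + t then f a else 0)
        = extF P f ((q : Torus Lx Ly) - t) := by
    intro t
    rw [← sum_ite_subtype P f ((q : Torus Lx Ly) - t)]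
    apply Finset.sum_congr rfl
    intro a _
    have hc : ((q : Torus Lx Ly) = ↑a + t) ↔ ((a : Torus Lx Ly) = (q : Torus Lx Ly) - t) :=
      ⟨fun h => by rw [h]; ring, fun h => by rw [h]; ring⟩
    simp only [hc]
  have : (HM hx hy P).vecMul f q = ∑ a, f a * HM hx hy P a q := by
    simp [Matrix.vecMul, dotProduct]
  rw [this]
  simp only [HM_apply, mul_add, mul_ite, mul_one, mul_zero, Finset.sum_add_distrib, key]

/-- membership in the left kernel -/
lemma mem_ker_iff (P : Torus Lx Ly → Prop) [DecidablePred P]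
    (f : {p : Torus Lx Ly // P p} → ZMod 2) :
    f ∈ LinearMap.ker (HM hx hy P).vecMulLinear
    ↔ ∀ q : DataSite Lx Ly hx hy,
      extF P f ((q : Torus Lx Ly) - toTorus Lx Ly (0,1))
    + extF P f ((q : Torus Lx Ly) - toTorus Lx Ly (1,2))
    + extF P f ((q : Torus Lx Ly) - toTorus Lx Ly (3,2))
    + extF P f ((q : Torus Lx Ly) - toTorus Lx Ly (4,3))
    + extF P f ((q : Torus Lx Ly) - toTorus Lx Ly (5,4))
    + extF P f ((q : Torus Lx Ly) - toTorus Lx Ly (7,4))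
    + extF P f ((q : Torus Lx Ly) - toTorus Lx Ly (8,5)) = 0 := by
  rw [LinearMap.mem_ker, Matrix.vecMulLinear_apply, funext_iff]
  constructor
  · intro h q
    rw [← vecMul_HM hx hy P f q]
    exact h q
  · intro h q
    rw [vecMul_HM hx hy P f q]
    exact h q

end Matrixpart

section Derive

variable [NeZero Lx] [NeZero Ly] (hx : 2 ∣ Lx) (hy : 2 ∣ Ly)

lemma mem_ker_iff' (P : Torus Lx Ly → Prop) [DecidablePred P]
    (f : {p : Torus Lx Ly // P p} → ZMod 2) :
    f ∈ LinearMap.ker (HM hx hy P).vecMulLinear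
    ↔ ∀ v : Torus Lx Ly, torusParity hx hy v = 0 →
      extF P f (v - toTorus Lx Ly (0,1))
    + extF P f (v - toTorus Lx Ly (1,2))
    + extF P f (v - toTorus Lx Ly (3,2))
    + extF P f (v - toTorus Lx Ly (4,3))
    + extF P f (v - toTorus Lx Ly (5,4))
    + extF P f (v - toTorus Lx Ly (7,4))
    + extF P f (v - toTorus Lx Ly (8,5)) = 0 := by
  rw [mem_ker_iff hx hy P f]
  exact ⟨fun h v hv => h ⟨v, hv⟩, fun h q => h (q : Torus Lx Ly) q.2⟩

lemma cx_point (p : Torus Lx Ly) (c d : ℕ) (a b : ℤ) :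
    ZMod.castHom hx (ZMod 2) ((sh c d p - toTorus Lx Ly (a,b)).1)
    = ZMod.castHom hx (ZMod 2) p.1 + (c : ZMod 2) - (a : ZMod 2) := by
  have h : (sh c d p - toTorus Lx Ly (a,b)).1 = p.1 + (c : ZMod Lx) - ((a : ℤ) : ZMod Lx) := rfl
  rw [h, map_sub, map_add, map_natCast, map_intCast]

lemma cy_point (p : Torus Lx Ly) (c d : ℕ) (a b : ℤ) :
    ZMod.castHom hy (ZMod 2) ((sh c d p - toTorus Lx Ly (a,b)).2)
    = ZMod.castHom hy (ZMod 2) p.2 + (d : ZMod 2) - (b : ZMod 2) := by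
  have h : (sh c d p - toTorus Lx Ly (a,b)).2 = p.2 + (d : ZMod Ly) - ((b : ℤ) : ZMod Ly) := rfl
  rw [h, map_sub, map_add, map_natCast, map_intCast]

lemma cx_sh (p : Torus Lx Ly) (c d : ℕ) :
    ZMod.castHom hx (ZMod 2) ((sh c d p).1) = ZMod.castHom hx (ZMod 2) p.1 + (c : ZMod 2) := by
  have h : (sh c d p).1 = p.1 + (c : ZMod Lx) := rfl
  rw [h, map_add, map_natCast]

lemma cy_sh (p : Torus Lx Ly) (c d : ℕ) :
    ZMod.castHom hy (ZMod 2) ((sh c d p).2) = ZMod.castHom hy (ZMod 2) p.2 + (d : ZMod 2) := by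
  have h : (sh c d p).2 = p.2 + (d : ZMod Ly) := rfl
  rw [h, map_add, map_natCast]

lemma sh_sub_toTorus (p : Torus Lx Ly) (c d : ℕ) (a b : ℤ) (m n : ℕ)
    (h1 : (c:ℤ) - a = (m:ℤ)) (h2 : (d:ℤ) - b = (n:ℤ)) :
    sh c d p - toTorus Lx Ly (a,b) = sh m n p := by
  have hc1 := congrArg (fun z : ℤ => (z : ZMod Lx)) h1
  have hc2 := congrArg (fun z : ℤ => (z : ZMod Ly)) h2
  push_cast at hc1 hc2
  unfold sh toTorus
  ext
  · show p.1 + (c : ZMod Lx) - ((a:ℤ) : ZMod Lx) = p.1 + (m : ZMod Lx)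
    linear_combination hc1
  · show p.2 + (d : ZMod Ly) - ((b:ℤ) : ZMod Ly) = p.2 + (n : ZMod Ly)
    linear_combination hc2

variable (P : Torus Lx Ly → Prop) [DecidablePred P] (εx εy : ZMod 2)
  (hε : εx + εy = 1)
  (hP : ∀ p : Torus Lx Ly, P p ↔
    (ZMod.castHom hx (ZMod 2) p.1 = εx ∧ ZMod.castHom hy (ZMod 2) p.2 = εy))

include hε hP in
lemma ker_to_AB (f : {p : Torus Lx Ly // P p} → ZMod 2)
    (hf : f ∈ LinearMap.ker (HM hx hy P).vecMulLinear) :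
    (∀ p, extF P f p + extF P f (sh 2 0 p) + extF P f (sh 4 2 p) + extF P f (sh 6 2 p) = 0)
    ∧ (∀ p, extF P f p + extF P f (sh 4 2 p) + extF P f (sh 8 4 p) = 0) := by
  have hker := (mem_ker_iff' hx hy P f).1 hf
  have htwo : (2 : ZMod 2) = 0 := rfl
  -- vanishing of wrong-parity terms, when P p holds
  have hvan : ∀ p : Torus Lx Ly, P p → ∀ (c d : ℕ) (a b : ℤ),
      ((d : ZMod 2) ≠ (b : ZMod 2)) →
      extF P f (sh c d p - toTorus Lx Ly (a,b)) = 0 := by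
    intro p hp c d a b hne
    apply extF_eq_zero
    intro hPt
    have h2' := ((hP _).1 hPt).2
    rw [cy_point hy p c d a b, ((hP p).1 hp).2] at h2'
    exact hne (by linear_combination h2')
  -- vanishing of everything when ¬ P p
  have hflip : ∀ p : Torus Lx Ly, ¬ P p → ∀ (c d : ℕ),
      (c : ZMod 2) = 0 → (d : ZMod 2) = 0 → extF P f (sh c d p) = 0 := by
    intro p hp c d hc hd
    apply extF_eq_zero
    intro hPt
    obtain ⟨h1', h2'⟩ := (hP _).1 hPt
    rw [cx_sh hx p c d, hc, add_zero] at h1'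
    rw [cy_sh hy p c d, hd, add_zero] at h2'
    exact hp ((hP p).2 ⟨h1', h2'⟩)
  constructor
  · intro p
    by_cases hp : P p
    · obtain ⟨hp1, hp2⟩ := (hP p).1 hp
      have hq : torusParity hx hy (sh 7 4 p) = 0 := by
        unfold torusParity
        rw [cx_sh hx p 7 4, cy_sh hy p 7 4, hp1, hp2]
        have h7 : ((7:ℕ) : ZMod 2) = 1 := rfl
        have h4 : ((4:ℕ) : ZMod 2) = 0 := rfl
        rw [h7, h4]
        linear_combination hε + htwo
      have h1 := hker (sh 7 4 p) hq
      rw [hvan p hp 7 4 0 1 (by decide), hvan p hp 7 4 4 3 (by decide),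
          hvan p hp 7 4 8 5 (by decide),
          sh_sub_toTorus p 7 4 1 2 6 2 (by norm_num) (by norm_num),
          sh_sub_toTorus p 7 4 3 2 4 2 (by norm_num) (by norm_num),
          sh_sub_toTorus p 7 4 5 4 2 0 (by norm_num) (by norm_num),
          sh_sub_toTorus p 7 4 7 4 0 0 (by norm_num) (by norm_num),
          sh_zero] at h1
      linear_combination h1
    · rw [extF_eq_zero f hp, hflip p hp 2 0 (by decide) (by decide),
          hflip p hp 4 2 (by decide) (by decide), hflip p hp 6 2 (by decide) (by decide)]
      norm_num
  · intro p
    by_cases hp : P p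
    · obtain ⟨hp1, hp2⟩ := (hP p).1 hp
      have hq : torusParity hx hy (sh 8 5 p) = 0 := by
        unfold torusParity
        rw [cx_sh hx p 8 5, cy_sh hy p 8 5, hp1, hp2]
        have h8 : ((8:ℕ) : ZMod 2) = 0 := rfl
        have h5 : ((5:ℕ) : ZMod 2) = 1 := rfl
        rw [h8, h5]
        linear_combination hε + htwo
      have h1 := hker (sh 8 5 p) hq
      rw [hvan p hp 8 5 1 2 (by decide), hvan p hp 8 5 3 2 (by decide),
          hvan p hp 8 5 5 4 (by decide), hvan p hp 8 5 7 4 (by decide),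
          sh_sub_toTorus p 8 5 0 1 8 4 (by norm_num) (by norm_num),
          sh_sub_toTorus p 8 5 4 3 4 2 (by norm_num) (by norm_num),
          sh_sub_toTorus p 8 5 8 5 0 0 (by norm_num) (by norm_num),
          sh_zero] at h1
      linear_combination h1
    · rw [extF_eq_zero f hp, hflip p hp 4 2 (by decide) (by decide),
          hflip p hp 8 4 (by decide) (by decide)]
      norm_num

end Derive

section Gen

variable [NeZero Lx] [NeZero Ly] (hx : 2 ∣ Lx) (hy : 2 ∣ Ly) (h6 : 6 ∣ Ly)
variable (P : Torus Lx Ly → Prop) [DecidablePred P] (εx εy : ZMod 2)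

/-- a pattern generator given by a function on `y mod 6` -/
def gen (e : ZMod 6 → ZMod 2) : {p : Torus Lx Ly // P p} → ZMod 2 :=
  fun a => e (ZMod.castHom h6 (ZMod 6) (a : Torus Lx Ly).2)

variable (hε : εx + εy = 1)
  (hP : ∀ p : Torus Lx Ly, P p ↔
    (ZMod.castHom hx (ZMod 2) p.1 = εx ∧ ZMod.castHom hy (ZMod 2) p.2 = εy))

lemma cx_point' (v : Torus Lx Ly) (a b : ℤ) :
    ZMod.castHom hx (ZMod 2) ((v - toTorus Lx Ly (a,b)).1)
    = ZMod.castHom hx (ZMod 2) v.1 - (a : ZMod 2) := by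
  have h : (v - toTorus Lx Ly (a,b)).1 = v.1 - ((a : ℤ) : ZMod Lx) := rfl
  rw [h, map_sub, map_intCast]

lemma cy_point' (v : Torus Lx Ly) (a b : ℤ) :
    ZMod.castHom hy (ZMod 2) ((v - toTorus Lx Ly (a,b)).2)
    = ZMod.castHom hy (ZMod 2) v.2 - (b : ZMod 2) := by
  have h : (v - toTorus Lx Ly (a,b)).2 = v.2 - ((b : ℤ) : ZMod Ly) := rfl
  rw [h, map_sub, map_intCast]

lemma c6_point' (v : Torus Lx Ly) (a b : ℤ) :
    ZMod.castHom h6 (ZMod 6) ((v - toTorus Lx Ly (a,b)).2)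
    = ZMod.castHom h6 (ZMod 6) v.2 - (b : ZMod 6) := by
  have h : (v - toTorus Lx Ly (a,b)).2 = v.2 - ((b : ℤ) : ZMod Ly) := rfl
  rw [h, map_sub, map_intCast]

include hε hP in
lemma gen_mem (e : ZMod 6 → ZMod 2) (he : ∀ t, e t + e (t+2) + e (t+4) = 0) :
    gen h6 P e ∈ LinearMap.ker (HM hx hy P).vecMulLinear := by
  rw [mem_ker_iff' hx hy P]
  intro v hv
  have htwo : (2 : ZMod 2) = 0 := rfl
  have h01 : ∀ z : ZMod 2, z = 0 ∨ z = 1 := by decide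
  have hεv : ZMod.castHom hx (ZMod 2) v.1 = ZMod.castHom hy (ZMod 2) v.2 := by
    have hv' : ZMod.castHom hx (ZMod 2) v.1 + ZMod.castHom hy (ZMod 2) v.2 = 0 := hv
    linear_combination hv' - (ZMod.castHom hy (ZMod 2) v.2) * htwo
  set ε := ZMod.castHom hy (ZMod 2) v.2 with hεdef
  set c := ZMod.castHom h6 (ZMod 6) v.2 with hcdef
  have hterm : ∀ a b : ℤ, extF P (gen h6 P e) (v - toTorus Lx Ly (a,b))
      = if (ε - (a:ZMod 2) = εx ∧ ε - (b:ZMod 2) = εy)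
        then e (c - (b : ZMod 6)) else 0 := by
    intro a b
    by_cases h : P (v - toTorus Lx Ly (a,b))
    · rw [extF_pos _ h, if_pos]
      · show e (ZMod.castHom h6 (ZMod 6) ((v - toTorus Lx Ly (a,b)).2)) = _
        rw [c6_point' h6 v a b]
      · obtain ⟨h1, h2⟩ := (hP _).1 h
        rw [cx_point' hx v a b, hεv] at h1
        rw [cy_point' hy v a b] at h2
        exact ⟨h1, h2⟩
    · rw [extF_eq_zero _ h, if_neg]
      intro ⟨h1, h2⟩
      apply h
      apply (hP _).2
      rw [cx_point' hx v a b, cy_point' hy v a b, hεv]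
      exact ⟨h1, h2⟩
  rw [hterm 0 1, hterm 1 2, hterm 3 2, hterm 4 3, hterm 5 4, hterm 7 4, hterm 8 5]
  have h6z : (6 : ZMod 6) = 0 := rfl
  have a1 : c - ((1:ℤ) : ZMod 6) = c + 5 := by linear_combination -h6z
  have a3 : c - ((3:ℤ) : ZMod 6) = c + 3 := by linear_combination -h6z
  have a5 : c - ((5:ℤ) : ZMod 6) = c + 1 := by linear_combination -h6z
  rcases h01 εx with hεx | hεx <;> rcases h01 ε with hε2 | hε2 <;>
    have hεy : εy = εx + 1 := by linear_combination hε - εx * htwo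
  all_goals rw [hεx, hε2] at *
  all_goals rw [hεy, hεx] at *
  -- now all if-conditions are concrete
  · -- εx = 0, ε = 0 : selected offsets (0,1),(4,3),(8,5)
    rw [if_pos (by decide), if_neg (by decide), if_neg (by decide), if_pos (by decide),
        if_neg (by decide), if_neg (by decide), if_pos (by decide), a1, a3, a5]
    have hhe := he (c + 1)
    have b1 : c + 1 + 2 = c + 3 := by ring
    have b2 : c + 1 + 4 = c + 5 := by ring
    rw [b1, b2] at hhe
    linear_combination hhe
  · -- εx = 0, ε = 1 : selected offsets (1,2),(3,2),(5,4),(7,4)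
    rw [if_neg (by decide), if_pos (by decide), if_pos (by decide), if_neg (by decide),
        if_pos (by decide), if_pos (by decide), if_neg (by decide)]
    linear_combination (e (c - ((2:ℤ) : ZMod 6)) + e (c - ((4:ℤ) : ZMod 6))) * htwo
  · -- εx = 1, ε = 0 : selected offsets (1,2),(3,2),(5,4),(7,4)
    rw [if_neg (by decide), if_pos (by decide), if_pos (by decide), if_neg (by decide),
        if_pos (by decide), if_pos (by decide), if_neg (by decide)]
    linear_combination (e (c - ((2:ℤ) : ZMod 6)) + e (c - ((4:ℤ) : ZMod 6))) * htwo
  · -- εx = 1, ε = 1 : selected offsets (0,1),(4,3),(8,5)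
    rw [if_pos (by decide), if_neg (by decide), if_neg (by decide), if_pos (by decide),
        if_neg (by decide), if_neg (by decide), if_pos (by decide), a1, a3, a5]
    have hhe := he (c + 1)
    have b1 : c + 1 + 2 = c + 3 := by ring
    have b2 : c + 1 + 4 = c + 5 := by ring
    rw [b1, b2] at hhe
    linear_combination hhe

end Gen

section Master

variable [NeZero Lx] [NeZero Ly] (hx : 2 ∣ Lx) (hy : 2 ∣ Ly)
variable (P : Torus Lx Ly → Prop) [DecidablePred P] (εx εy : ZMod 2)

lemma h26 : (2:ℕ) ∣ 6 := by norm_num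

include hx in
theorem master (hε : εx + εy = 1)
    (hP : ∀ p : Torus Lx Ly, P p ↔
      (ZMod.castHom hx (ZMod 2) p.1 = εx ∧ ZMod.castHom hy (ZMod 2) p.2 = εy)) :
    Module.finrank (ZMod 2) (LinearMap.ker (HM hx hy P).vecMulLinear)
      = if 3 ∣ (Ly / 2) then 2 else 0 := by
  have htwo : (2 : ZMod 2) = 0 := rfl
  by_cases h3 : 3 ∣ (Ly / 2)
  · rw [if_pos h3]
    have hLy0 : Ly ≠ 0 := NeZero.ne Ly
    have h6 : 6 ∣ Ly := by omega
    set cx0 : ℕ := εx.val with hcx0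
    set cy0 : ℕ := εy.val with hcy0
    have hvx : ((cx0 : ℕ) : ZMod 2) = εx := ZMod.natCast_rightInverse εx
    have hvy : ((cy0 : ℕ) : ZMod 2) = εy := ZMod.natCast_rightInverse εy
    set p0 : Torus Lx Ly := ((cx0 : ZMod Lx), (cy0 : ZMod Ly)) with hp0def
    set p4 : Torus Lx Ly := ((cx0 : ZMod Lx), ((cy0 + 4 : ℕ) : ZMod Ly)) with hp4def
    have hp0 : P p0 := by
      apply (hP p0).2
      constructor
      · show ZMod.castHom hx (ZMod 2) ((cx0 : ℕ) : ZMod Lx) = εx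
        rw [map_natCast, hvx]
      · show ZMod.castHom hy (ZMod 2) ((cy0 : ℕ) : ZMod Ly) = εy
        rw [map_natCast, hvy]
    have hp4 : P p4 := by
      apply (hP p4).2
      constructor
      · show ZMod.castHom hx (ZMod 2) ((cx0 : ℕ) : ZMod Lx) = εx
        rw [map_natCast, hvx]
      · show ZMod.castHom hy (ZMod 2) ((cy0 + 4 : ℕ) : ZMod Ly) = εy
        rw [map_natCast]
        push_cast
        rw [hvy]
        have h4 : (4 : ZMod 2) = 0 := rfl
        rw [h4, add_zero]
    set c0 : ZMod 6 := ((cy0 : ℕ) : ZMod 6) with hc0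
    set e1 : ZMod 6 → ZMod 2 := fun t => if t = c0 ∨ t = c0 + 2 then 1 else 0 with he1def
    set e2 : ZMod 6 → ZMod 2 := fun t => if t = c0 + 2 ∨ t = c0 + 4 then 1 else 0 with he2def
    have he1 : ∀ t, e1 t + e1 (t+2) + e1 (t+4) = 0 := by
      have key : ∀ c t : ZMod 6, (if t = c ∨ t = c + 2 then (1:ZMod 2) else 0)
          + (if t + 2 = c ∨ t + 2 = c + 2 then 1 else 0)
          + (if t + 4 = c ∨ t + 4 = c + 2 then 1 else 0) = 0 := by decide
      intro t; exact key c0 t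
    have he2 : ∀ t, e2 t + e2 (t+2) + e2 (t+4) = 0 := by
      have key : ∀ c t : ZMod 6, (if t = c + 2 ∨ t = c + 4 then (1:ZMod 2) else 0)
          + (if t + 2 = c + 2 ∨ t + 2 = c + 4 then 1 else 0)
          + (if t + 4 = c + 2 ∨ t + 4 = c + 4 then 1 else 0) = 0 := by decide
      intro t; exact key c0 t
    set g1 := gen h6 P e1 with hg1def
    set g2 := gen h6 P e2 with hg2def
    have hg1 : g1 ∈ LinearMap.ker (HM hx hy P).vecMulLinear :=
      gen_mem hx hy h6 P εx εy hε hP e1 he1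
    have hg2 : g2 ∈ LinearMap.ker (HM hx hy P).vecMulLinear :=
      gen_mem hx hy h6 P εx εy hε hP e2 he2
    have hcomp : ∀ z : ZMod Ly,
        ZMod.castHom h26 (ZMod 2) (ZMod.castHom h6 (ZMod 6) z) = ZMod.castHom hy (ZMod 2) z := by
      intro z
      have h := ZMod.castHom_comp h26 h6
      exact congrFun (congrArg (fun (f : ZMod Ly →+* ZMod 2) => (f : ZMod Ly → ZMod 2)) h) z
    have hmem3 : ∀ t : ZMod 6,
        ZMod.castHom h26 (ZMod 2) t = ZMod.castHom h26 (ZMod 2) c0 →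
        (t = c0 ∨ t = c0 + 2 ∨ t = c0 + 4) := by
      have key : ∀ c t : ZMod 6, ZMod.castHom h26 (ZMod 2) t = ZMod.castHom h26 (ZMod 2) c →
          (t = c ∨ t = c + 2 ∨ t = c + 4) := by decide
      exact fun t => key c0 t
    have hc06 : ZMod.castHom h6 (ZMod 6) p0.2 = c0 := by
      show ZMod.castHom h6 (ZMod 6) ((cy0 : ℕ) : ZMod Ly) = c0
      rw [map_natCast]
    have hc46 : ZMod.castHom h6 (ZMod 6) p4.2 = c0 + 4 := by
      show ZMod.castHom h6 (ZMod 6) ((cy0 + 4 : ℕ) : ZMod Ly) = c0 + 4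
      rw [map_natCast]
      push_cast
      rfl
    have hnot1 : ∀ c : ZMod 6, ¬(c = c + 2 ∨ c = c + 4) := by decide
    have hnot2 : ∀ c : ZMod 6, ¬(c + 4 = c ∨ c + 4 = c + 2) := by decide
    have hnot3 : ∀ c : ZMod 6, ¬(c + 2 = c + 2 + 2 ∨ c + 2 = c + 2 + 4) := by decide
    have he1c0 : e1 c0 = 1 := if_pos (Or.inl rfl)
    have he2c0 : e2 c0 = 0 := if_neg (hnot1 c0)
    have he1c2 : e1 (c0 + 2) = 1 := if_pos (Or.inr rfl)
    have he2c2 : e2 (c0 + 2) = 1 := if_pos (Or.inl rfl)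
    have he1c4 : e1 (c0 + 4) = 0 := if_neg (hnot2 c0)
    have he2c4 : e2 (c0 + 4) = 1 := if_pos (Or.inr rfl)
    have hspan : LinearMap.ker (HM hx hy P).vecMulLinear
        = Submodule.span (ZMod 2) (Set.range ![g1, g2]) := by
      apply le_antisymm
      · intro f hf
        obtain ⟨hA, hB⟩ := ker_to_AB hx hy P εx εy hε hP f hf
        set a := extF P f p0 with ha
        set b := extF P f p4 with hb
        have hsh04 : sh 0 4 p0 = p4 := by
          unfold sh
          ext
          · push_cast; ring
          · show (cy0 : ZMod Ly) + ((4:ℕ) : ZMod Ly) = ((cy0 + 4 : ℕ) : ZMod Ly)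
            push_cast; ring
        have hmid : extF P f (sh 0 2 p0) = a + b := by
          have hstep := core_ystep hA hB p0
          rw [hsh04] at hstep
          linear_combination hstep - (a + b) * htwo
        have hxpar : ∀ x : {p : Torus Lx Ly // P p},
            ZMod.castHom hx (ZMod 2) (x : Torus Lx Ly).1 = ZMod.castHom hx (ZMod 2) p0.1 := by
          intro x
          rw [((hP _).1 x.2).1]
          show εx = ZMod.castHom hx (ZMod 2) ((cx0 : ℕ) : ZMod Lx)
          rw [map_natCast, hvx]
        have hrep : ∀ x : {p : Torus Lx Ly // P p},
            f x = a * e1 (ZMod.castHom h6 (ZMod 6) (x : Torus Lx Ly).2)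
                + b * e2 (ZMod.castHom h6 (ZMod 6) (x : Torus Lx Ly).2) := by
          intro x
          have hfx : extF P f (x : Torus Lx Ly) = f x := by
            rw [extF_pos f x.2]
          set t := ZMod.castHom h6 (ZMod 6) (x : Torus Lx Ly).2 with htdef
          have ht2 : ZMod.castHom h26 (ZMod 2) t = ZMod.castHom h26 (ZMod 2) c0 := by
            rw [htdef, hcomp, ((hP _).1 x.2).2]
            rw [hc0, map_natCast, hvy]
          rcases hmem3 t ht2 with h | h | h
          · have hgc : extF P f (x : Torus Lx Ly) = extF P f p0 :=
              g_const_6 hx hA hB h6 _ p0 (hxpar x) (by rw [← htdef, h, hc06])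
            rw [← hfx, hgc, ← ha, h, he1c0, he2c0]
            ring
          · have hc26 : ZMod.castHom h6 (ZMod 6) (sh 0 2 p0).2 = c0 + 2 := by
              show ZMod.castHom h6 (ZMod 6) (p0.2 + ((2:ℕ) : ZMod Ly)) = c0 + 2
              rw [map_add, hc06, map_natCast]
              norm_num
            have hxpar2 : ZMod.castHom hx (ZMod 2) (x : Torus Lx Ly).1
                = ZMod.castHom hx (ZMod 2) (sh 0 2 p0).1 := by
              rw [cx_sh hx p0 0 2, hxpar x]
              norm_num
            have hgc : extF P f (x : Torus Lx Ly) = extF P f (sh 0 2 p0) :=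
              g_const_6 hx hA hB h6 _ (sh 0 2 p0) hxpar2 (by rw [← htdef, h, hc26])
            rw [← hfx, hgc, hmid, h, he1c2, he2c2]
            ring
          · have hxpar4 : ZMod.castHom hx (ZMod 2) (x : Torus Lx Ly).1
                = ZMod.castHom hx (ZMod 2) p4.1 := hxpar x
            have hgc : extF P f (x : Torus Lx Ly) = extF P f p4 :=
              g_const_6 hx hA hB h6 _ p4 hxpar4 (by rw [← htdef, h, hc46])
            rw [← hfx, hgc, ← hb, h, he1c4, he2c4]
            ring
        have hfrep : f = a • g1 + b • g2 := by
          funext x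
          rw [hrep x]
          show _ = a • g1 x + b • g2 x
          rw [hg1def, hg2def]
          show _ = a • e1 (ZMod.castHom h6 (ZMod 6) (x : Torus Lx Ly).2)
              + b • e2 (ZMod.castHom h6 (ZMod 6) (x : Torus Lx Ly).2)
          rw [smul_eq_mul, smul_eq_mul]
        rw [hfrep]
        apply Submodule.add_mem
        · exact Submodule.smul_mem _ _ (Submodule.subset_span ⟨0, rfl⟩)
        · exact Submodule.smul_mem _ _ (Submodule.subset_span ⟨1, rfl⟩)
      · rw [Submodule.span_le]
        rintro _ ⟨i, rfl⟩
        fin_cases i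
        · exact hg1
        · exact hg2
    have hli : LinearIndependent (ZMod 2) ![g1, g2] := by
      rw [linearIndependent_fin2]
      constructor
      · intro h0
        have hev := congrFun h0 ⟨p4, hp4⟩
        have : g2 ⟨p4, hp4⟩ = 0 := by
          simpa using hev
        rw [hg2def] at this
        have hval : e2 (ZMod.castHom h6 (ZMod 6) p4.2) = 0 := this
        rw [hc46, he2c4] at hval
        exact one_ne_zero hval
      · intro aa hcontr
        have hev := congrFun hcontr ⟨p0, hp0⟩
        have : aa • g2 ⟨p0, hp0⟩ = g1 ⟨p0, hp0⟩ := by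
          simpa using hev
        rw [hg1def, hg2def] at this
        have hval : aa • e2 (ZMod.castHom h6 (ZMod 6) p0.2)
            = e1 (ZMod.castHom h6 (ZMod 6) p0.2) := this
        rw [hc06, he1c0, he2c0, smul_eq_mul, mul_zero] at hval
        exact zero_ne_one hval
    rw [hspan, finrank_span_eq_card hli]
    simp
  · rw [if_neg h3]
    have hbot : LinearMap.ker (HM hx hy P).vecMulLinear = ⊥ := by
      rw [Submodule.eq_bot_iff]
      intro f hf
      obtain ⟨hA, hB⟩ := ker_to_AB hx hy P εx εy hε hP f hf
      funext x
      have hz := g_zero_of_not_dvd hy hA hB h3 (x : Torus Lx Ly)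
      rw [extF_pos f x.2] at hz
      simpa using hz
    rw [hbot]
    exact finrank_bot _ _

end Master

section Card

variable [NeZero Lx] [NeZero Ly]

lemma card_fiber {L : ℕ} [NeZero L] (hd : 2 ∣ L) (c : ZMod 2) :
    Fintype.card {z : ZMod L // ZMod.castHom hd (ZMod 2) z = c} = L / 2 := by
  have hstep : ∀ c' : ZMod 2,
      {z : ZMod L // ZMod.castHom hd (ZMod 2) z = c'}
        ≃ {z : ZMod L // ZMod.castHom hd (ZMod 2) z = c' + 1} :=
    fun c' =>
    { toFun := fun z => ⟨(z : ZMod L) + 1, by rw [map_add, map_one, z.2]⟩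
      invFun := fun z => ⟨(z : ZMod L) - 1, by rw [map_sub, map_one, z.2]; ring⟩
      left_inv := fun z => Subtype.ext (by push_cast; ring)
      right_inv := fun z => Subtype.ext (by push_cast; ring) }
  have hiff : ∀ u c' : ZMod 2, (¬ u = c') ↔ u = c' + 1 := by decide
  have hcompl : Fintype.card {z : ZMod L // ZMod.castHom hd (ZMod 2) z = c + 1}
      = Fintype.card {z : ZMod L // ¬ (ZMod.castHom hd (ZMod 2) z = c)} :=
    Fintype.card_congr (Equiv.subtypeEquivRight (fun z => (hiff _ _).symm))
  have heq : Fintype.card {z : ZMod L // ZMod.castHom hd (ZMod 2) z = c}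
      = Fintype.card {z : ZMod L // ZMod.castHom hd (ZMod 2) z = c + 1} :=
    Fintype.card_congr (hstep c)
  have hsum := Fintype.card_subtype_compl (fun z : ZMod L => ZMod.castHom hd (ZMod 2) z = c)
  have hle : Fintype.card {z : ZMod L // ZMod.castHom hd (ZMod 2) z = c}
      ≤ Fintype.card (ZMod L) := Fintype.card_subtype_le _
  rw [ZMod.card L] at hsum hle
  omega

variable (hx : 2 ∣ Lx) (hy : 2 ∣ Ly)

lemma card_anc (εx εy : ZMod 2) :
    Fintype.card {p : Torus Lx Ly //
      ZMod.castHom hx (ZMod 2) p.1 = εx ∧ ZMod.castHom hy (ZMod 2) p.2 = εy}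
    = (Lx / 2) * (Ly / 2) := by
  rw [Fintype.card_congr (Equiv.subtypeProdEquivProd
      (p := fun x => ZMod.castHom hx (ZMod 2) x = εx)
      (q := fun y => ZMod.castHom hy (ZMod 2) y = εy)),
    Fintype.card_prod, card_fiber hx εx, card_fiber hy εy]

lemma card_data : Fintype.card (DataSite Lx Ly hx hy) = Lx * (Ly / 2) := by
  have he : DataSite Lx Ly hx hy
      ≃ Σ x : ZMod Lx, {y : ZMod Ly //
          ZMod.castHom hy (ZMod 2) y = ZMod.castHom hx (ZMod 2) x} :=
    { toFun := fun p => ⟨p.1.1, p.1.2, by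
        have hp := p.2
        unfold torusParity at hp
        have htwo : (2 : ZMod 2) = 0 := rfl
        linear_combination hp - (ZMod.castHom hx (ZMod 2) p.1.1) * htwo⟩
      invFun := fun s => ⟨(s.1, s.2.1), by
        unfold torusParity
        have htwo : (2 : ZMod 2) = 0 := rfl
        have h2 := s.2.2
        linear_combination h2 + (ZMod.castHom hx (ZMod 2) s.1) * htwo⟩
      left_inv := fun p => rfl
      right_inv := fun s => rfl }
  rw [Fintype.card_congr he, Fintype.card_sigma]
  have : ∀ x : ZMod Lx, Fintype.card {y : ZMod Ly //
      ZMod.castHom hy (ZMod 2) y = ZMod.castHom hx (ZMod 2) x} = Ly / 2 :=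
    fun x => card_fiber hy _
  rw [Finset.sum_congr rfl (fun x _ => this x), Finset.sum_const, Finset.card_univ, ZMod.card,
    smul_eq_mul]

end Card

section Rank

lemma rank_add_ker {m n : Type} [Fintype m] [Fintype n] [DecidableEq m] [DecidableEq n]
    (M : Matrix m n (ZMod 2)) :
    M.rank + Module.finrank (ZMod 2) (LinearMap.ker M.vecMulLinear) = Fintype.card m := by
  have h1 : M.rank = M.transpose.rank := (Matrix.rank_transpose M).symm
  have h2 : M.transpose.mulVecLin = M.vecMulLinear := by
    ext v j
    simp [Matrix.mulVec_transpose]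
  have h3 : M.transpose.rank
      = Module.finrank (ZMod 2) (LinearMap.range M.vecMulLinear) := by
    rw [Matrix.rank, h2]
  rw [h1, h3]
  rw [LinearMap.finrank_range_add_finrank_ker M.vecMulLinear,
    Module.finrank_fintype_fun_eq_card]

end Rank

section Poly
open Polynomial

lemma gcd_deg (N : ℕ) (hN : N ≠ 0) :
    (EuclideanDomain.gcd (1 + X + X ^ 2) (X ^ N - 1 : Polynomial (ZMod 2))).natDegree
    = if 3 ∣ N then 2 else 0 := by
  have hpdeg : (1 + X + X ^ 2 : Polynomial (ZMod 2)).natDegree = 2 := by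
    compute_degree!
  have hdvd3 : (1 + X + X ^ 2 : Polynomial (ZMod 2)) ∣ (X ^ 3 - 1) := ⟨X - 1, by ring⟩
  by_cases h3 : 3 ∣ N
  · rw [if_pos h3]
    obtain ⟨m, hm⟩ := h3
    have hdvdN : (1 + X + X ^ 2 : Polynomial (ZMod 2)) ∣ (X ^ N - 1) := by
      have h1 : (X ^ 3 - 1 : Polynomial (ZMod 2)) ∣ (X ^ 3) ^ m - 1 ^ m :=
        sub_dvd_pow_sub_pow _ _ m
      rw [one_pow, ← pow_mul, ← hm] at h1
      exact hdvd3.trans h1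
    have hg1 := EuclideanDomain.gcd_dvd_left (1 + X + X ^ 2 : Polynomial (ZMod 2)) (X ^ N - 1)
    have hg2 : (1 + X + X ^ 2 : Polynomial (ZMod 2))
        ∣ EuclideanDomain.gcd (1 + X + X ^ 2) (X ^ N - 1) :=
      EuclideanDomain.dvd_gcd dvd_rfl hdvdN
    have hdeg := Polynomial.degree_eq_degree_of_associated (associated_of_dvd_dvd hg1 hg2)
    rw [Polynomial.natDegree_eq_of_degree_eq hdeg, hpdeg]
  · rw [if_neg h3]
    set k := N / 3 with hk
    set r := N % 3 with hr
    have hrange : r = 1 ∨ r = 2 := by omega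
    have hN3 : N = 3 * k + r := by omega
    obtain ⟨s, hs⟩ : (1 + X + X ^ 2 : Polynomial (ZMod 2)) ∣ ((X ^ 3) ^ k - 1) := by
      have := sub_dvd_pow_sub_pow (X ^ 3 : Polynomial (ZMod 2)) 1 k
      rw [one_pow] at this
      exact hdvd3.trans this
    have hXN : (X ^ N - 1 : Polynomial (ZMod 2))
        = (X ^ r - 1) + (1 + X + X ^ 2) * (s * X ^ r) := by
      rw [show N = 3 * k + r from hN3, pow_add, pow_mul]
      linear_combination (X : Polynomial (ZMod 2)) ^ r * hs
    have hc2 : (2 : Polynomial (ZMod 2)) = 0 := by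
      have h1 : (2 : Polynomial (ZMod 2)) = Polynomial.C (2 : ZMod 2) := rfl
      rw [h1, show (2 : ZMod 2) = 0 from rfl, map_zero]
    have hcop_r : IsCoprime (1 + X + X ^ 2 : Polynomial (ZMod 2)) (X ^ r - 1) := by
      rcases hrange with h | h
      · rw [h, pow_one]
        exact ⟨1, X, by linear_combination (X : Polynomial (ZMod 2)) ^ 2 * hc2⟩
      · rw [h]
        exact ⟨X, X + 1, by linear_combination ((X : Polynomial (ZMod 2)) ^ 3 + X ^ 2 - 1) * hc2⟩
    have hcop : IsCoprime (1 + X + X ^ 2 : Polynomial (ZMod 2)) (X ^ N - 1) := by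
      rw [hXN]
      exact hcop_r.add_mul_left_right _
    exact Polynomial.natDegree_eq_zero_of_isUnit (EuclideanDomain.gcd_isUnit_iff.2 hcop)

end Poly

end KC

open Polynomial in
/-- for the directional CSS construction of `W = NE²NE²N` with the
row-alternating layout on `(ℤ/L_x) × (ℤ/L_y)` (`L_x, L_y` even positive):
`dim ker(H_Xᵀ) = dim ker(H_Zᵀ) = deg gcd(1 + Y + Y², Y^{L_y/2} − 1)` over `F₂[Y]`,
hence `k = 2·deg gcd(1 + Y + Y², Y^{L_y/2} − 1)`; in particular `k = 4` if
`6 ∣ L_y` and `k = 0` otherwise. -/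
theorem kcollapse_criterion (Lx Ly : ℕ) [NeZero Lx] [NeZero Ly]
    (hx : 2 ∣ Lx) (hy : 2 ∣ Ly) :
    Module.finrank (ZMod 2) (LinearMap.ker (HX Lx Ly hx hy).vecMulLinear) =
        (EuclideanDomain.gcd (1 + X + X ^ 2)
          (X ^ (Ly / 2) - 1 : Polynomial (ZMod 2))).natDegree ∧
      Module.finrank (ZMod 2) (LinearMap.ker (HZ Lx Ly hx hy).vecMulLinear) =
        (EuclideanDomain.gcd (1 + X + X ^ 2)
          (X ^ (Ly / 2) - 1 : Polynomial (ZMod 2))).natDegree ∧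
      kDim Lx Ly hx hy =
        2 * (EuclideanDomain.gcd (1 + X + X ^ 2)
          (X ^ (Ly / 2) - 1 : Polynomial (ZMod 2))).natDegree ∧
      (6 ∣ Ly → kDim Lx Ly hx hy = 4) ∧
      (¬ 6 ∣ Ly → kDim Lx Ly hx hy = 0) := by
  classical
  have hLy0 : Ly ≠ 0 := NeZero.ne Ly
  have hLx0 : Lx ≠ 0 := NeZero.ne Lx
  have hPX : ∀ p : Torus Lx Ly,
      (torusParity hx hy p = 1 ∧ ZMod.castHom hy (ZMod 2) p.2 = 0) ↔
      (ZMod.castHom hx (ZMod 2) p.1 = 1 ∧ ZMod.castHom hy (ZMod 2) p.2 = 0) := by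
    intro p
    unfold torusParity
    generalize ZMod.castHom hx (ZMod 2) p.1 = u
    generalize ZMod.castHom hy (ZMod 2) p.2 = v
    revert u v
    decide
  have hPZ : ∀ p : Torus Lx Ly,
      (torusParity hx hy p = 1 ∧ ZMod.castHom hy (ZMod 2) p.2 = 1) ↔
      (ZMod.castHom hx (ZMod 2) p.1 = 0 ∧ ZMod.castHom hy (ZMod 2) p.2 = 1) := by
    intro p
    unfold torusParity
    generalize ZMod.castHom hx (ZMod 2) p.1 = u
    generalize ZMod.castHom hy (ZMod 2) p.2 = v
    revert u v
    decide
  have hkerX : Module.finrank (ZMod 2) (LinearMap.ker (HX Lx Ly hx hy).vecMulLinear)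
      = if 3 ∣ (Ly / 2) then 2 else 0 :=
    KC.master hx hy _ 1 0 (by decide) hPX
  have hkerZ : Module.finrank (ZMod 2) (LinearMap.ker (HZ Lx Ly hx hy).vecMulLinear)
      = if 3 ∣ (Ly / 2) then 2 else 0 :=
    KC.master hx hy _ 0 1 (by decide) hPZ
  have hgcd : (EuclideanDomain.gcd (1 + X + X ^ 2)
      (X ^ (Ly / 2) - 1 : Polynomial (ZMod 2))).natDegree
      = if 3 ∣ (Ly / 2) then 2 else 0 := KC.gcd_deg (Ly / 2) (by omega)
  have hcX : Fintype.card (XAncilla Lx Ly hx hy) = (Lx / 2) * (Ly / 2) := by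
    rw [Fintype.card_congr (Equiv.subtypeEquivRight hPX)]
    exact KC.card_anc hx hy 1 0
  have hcZ : Fintype.card (ZAncilla Lx Ly hx hy) = (Lx / 2) * (Ly / 2) := by
    rw [Fintype.card_congr (Equiv.subtypeEquivRight hPZ)]
    exact KC.card_anc hx hy 0 1
  have hcD := KC.card_data hx hy
  have hrkX := KC.rank_add_ker (HX Lx Ly hx hy)
  have hrkZ := KC.rank_add_ker (HZ Lx Ly hx hy)
  rw [hcX] at hrkX
  rw [hcZ] at hrkZ
  have hmul : Lx * (Ly / 2) = 2 * ((Lx / 2) * (Ly / 2)) := by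
    obtain ⟨m, hm⟩ := hx
    subst hm
    rw [Nat.mul_div_cancel_left m (by norm_num)]
    ring
  have h6iff : 6 ∣ Ly ↔ 3 ∣ (Ly / 2) := by omega
  have hkD : kDim Lx Ly hx hy = 2 * (if 3 ∣ (Ly / 2) then 2 else 0) := by
    unfold kDim
    rw [hcD, hmul]
    by_cases h3 : 3 ∣ (Ly / 2)
    · rw [if_pos h3] at hkerX hkerZ ⊢
      have hge : 3 ≤ (Lx / 2) * (Ly / 2) := by
        calc 3 = 1 * 3 := by norm_num
        _ ≤ (Lx / 2) * (Ly / 2) := Nat.mul_le_mul (by omega) (by omega)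
      omega
    · rw [if_neg h3] at hkerX hkerZ ⊢
      omega
  refine ⟨?_, ?_, ?_, ?_, ?_⟩
  · rw [hkerX, hgcd]
  · rw [hkerZ, hgcd]
  · rw [hkD, hgcd]
  · intro h6
    rw [hkD, if_pos (h6iff.1 h6)]
  · intro h6
    rw [hkD, if_neg (fun h3 => h6 (h6iff.2 h3))]
end
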